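/- Sobol'–Jansen identity for total effects: if X and X' are i.i.d. copies of the independent input vector with i-th coordinate resampled (X' agrees with X except X'_i is an independent copy of X_i), then for square-integrable Y = f(X), E[(f(X) − f(X'))²]/2 = Var(Y) − Cov(f(X), f(X')) = E[Var(Y | X_{−i})] = Var(Y)·S_{T_i}. -/

import Mathlib

open MeasureTheory ProbabilityTheory

/-
Write `A = X_{-i}`, `B = X_i`, so that `Y = H(A, B)` and `Y' = H(A, Z)`, where `H(a, t)` is `f`
evaluated at `a` with `t` inserted in coordinate `i`. By independence `(A, B, Z)` has
law `P_A ⊗ P_B ⊗ P_B`, so `(A, B)` and `(A, Z)` are identically distributed and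
`E[Y | A] = g(A)` with `g(a) = ∫ H(a, t) dP_B(t)`. Since `Y` and `Y'` have the same law,
`E[(Y - Y')²]/2 = Var Y - Cov(Y, Y')`. Fubini over the two independent copies of the resampled
coordinate gives `E[Y Y'] = E[g(A)²]`, i.e. `Cov(Y, Y') = Var E[Y | A]`, and the law of total
variance turns `Var Y - Var E[Y | A]` into `E[Var(Y | A)]`.
-/

lemma measurable_funSplitAt_symm {ι β : Type*} [DecidableEq ι] [MeasurableSpace β] (i : ι) :
    Measurable (Equiv.funSplitAt i β).symm := by
  refine measurable_pi_lambda _ fun j => ?_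
  by_cases h : j = i
  · subst h
    simpa using measurable_fst
  · simp only [Equiv.funSplitAt_symm_apply, h, dite_false]
    exact (measurable_pi_apply _).comp measurable_snd

namespace ProbabilityTheory

variable {Ω α β : Type*} {mΩ : MeasurableSpace Ω} {μ : Measure Ω}
  [MeasurableSpace α] [MeasurableSpace β] {A : Ω → α} {B Z : Ω → β} {H : α × β → ℝ}

lemma iIndepFun.indepFun_restrict_ne {ι : Type*} [Fintype ι] [DecidableEq ι]
    {X : ι → Ω → β} (hX : iIndepFun X μ) (hXm : ∀ j, Measurable (X j)) (i : ι) :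
    IndepFun (fun ω (j : {j // j ≠ i}) => X j ω) (X i) μ := by
  have hsplit := hX.indepFun_finset {i}ᶜ {i} disjoint_compl_left hXm
  exact hsplit.comp (measurable_pi_lambda _ fun j : {j // j ≠ i} => measurable_pi_apply
    ⟨j.1, Finset.mem_compl.mpr fun h => j.2 (Finset.mem_singleton.mp h)⟩)
    (measurable_pi_apply ⟨i, Finset.mem_singleton_self i⟩)

lemma integral_sub_sq_div_two_eq_variance_sub_covariance [IsProbabilityMeasure μ]
    {Y Y' : Ω → ℝ} (hY : MemLp Y 2 μ) (hYY' : IdentDistrib Y Y' μ μ) :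
    (∫ ω, (Y ω - Y' ω) ^ 2 ∂μ) / 2 = Var[Y; μ] - cov[Y, Y'; μ] := by
  have hY' : MemLp Y' 2 μ := hYY'.memLp_iff.mp hY
  have hmean : μ[Y - Y'] = 0 := by
    simp only [Pi.sub_apply]
    rw [integral_sub (hY.integrable one_le_two) (hY'.integrable one_le_two), hYY'.integral_eq,
      sub_self]
  have hsq : ∫ ω, (Y ω - Y' ω) ^ 2 ∂μ = Var[Y - Y'; μ] := by
    rw [variance_eq_sub (hY.sub hY'), hmean]
    simp
  rw [hsq, variance_sub hY hY', ← hYY'.variance_eq]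
  ring

lemma IndepFun.condDistrib_ae_eq_const [StandardBorelSpace β] [Nonempty β] [IsFiniteMeasure μ]
    (hA : AEMeasurable A μ) (hB : AEMeasurable B μ)
    (hAB : IndepFun A B μ) :
    condDistrib B A μ =ᵐ[μ.map A] Kernel.const α (μ.map B) := by
  rw [condDistrib_ae_eq_iff_measure_eq_compProd A hB, Measure.compProd_const]
  exact (indepFun_iff_map_prod_eq_prod_map_map hA hB).mp hAB

lemma IndepFun.condExp_comp_prodMk_ae_eq [StandardBorelSpace β] [Nonempty β] [IsFiniteMeasure μ]
    (hA : Measurable A) (hB : Measurable B) (hAB : IndepFun A B μ) (hH : StronglyMeasurable H)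
    (hint : Integrable (fun ω => H (A ω, B ω)) μ) :
    μ[fun ω => H (A ω, B ω) | MeasurableSpace.comap A inferInstance] =ᵐ[μ]
      fun ω => ∫ t, H (A ω, t) ∂(μ.map B) := by
  filter_upwards [condExp_prod_ae_eq_integral_condDistrib hA hB.aemeasurable hH hint,
    ae_of_ae_map hA.aemeasurable
      (hAB.condDistrib_ae_eq_const hA.aemeasurable hB.aemeasurable)] with ω hω hconst
  rw [hω, hconst, Kernel.const_apply]

lemma integral_mul_resample_eq_integral_sq {μA : Measure α} {ν : Measure β} [SFinite μA]
    [SFinite ν]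
    (hint : Integrable (fun p : α × β × β => H (p.1, p.2.1) * H (p.1, p.2.2))
      (μA.prod (ν.prod ν))) :
    ∫ p, H (p.1, p.2.1) * H (p.1, p.2.2) ∂(μA.prod (ν.prod ν)) =
      ∫ a, (∫ t, H (a, t) ∂ν) ^ 2 ∂μA := by
  rw [integral_prod _ hint]
  refine integral_congr_ae (Filter.Eventually.of_forall fun a => ?_)
  dsimp only
  rw [integral_prod_mul (fun t => H (a, t)) (fun t => H (a, t)), sq]

lemma map_prodMk_prodMk_eq_prod_prod [IsFiniteMeasure μ] (hA : Measurable A)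
    (hB : Measurable B) (hZ : Measurable Z)
    (hAB : IndepFun A B μ) (hABZ : IndepFun (fun ω => (A ω, B ω)) Z μ)
    (hZB : μ.map Z = μ.map B) :
    μ.map (fun ω => (A ω, B ω, Z ω)) = (μ.map A).prod ((μ.map B).prod (μ.map B)) := by
  have hlaw :
      μ.map (fun ω => ((A ω, B ω), Z ω)) = ((μ.map A).prod (μ.map B)).prod (μ.map B) := by
    rw [(indepFun_iff_map_prod_eq_prod_map_map (hA.prodMk hB).aemeasurable
      hZ.aemeasurable).mp hABZ, (indepFun_iff_map_prod_eq_prod_map_map hA.aemeasurable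
      hB.aemeasurable).mp hAB, hZB]
  rw [← Measure.prodAssoc_prod, ← hlaw,
    Measure.map_map MeasurableEquiv.prodAssoc.measurable ((hA.prodMk hB).prodMk hZ)]
  rfl

lemma identDistrib_prodMk_resample [IsFiniteMeasure μ] (hA : Measurable A)
    (hB : Measurable B) (hZ : Measurable Z)
    (hAB : IndepFun A B μ) (hABZ : IndepFun (fun ω => (A ω, B ω)) Z μ)
    (hZB : μ.map Z = μ.map B) :
    IdentDistrib (fun ω => (A ω, B ω)) (fun ω => (A ω, Z ω)) μ μ where
  aemeasurable_fst := (hA.prodMk hB).aemeasurable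
  aemeasurable_snd := (hA.prodMk hZ).aemeasurable
  map_eq := by
    have hAZ : IndepFun A Z μ := hABZ.comp measurable_fst measurable_id
    rw [(indepFun_iff_map_prod_eq_prod_map_map hA.aemeasurable hB.aemeasurable).mp hAB,
      (indepFun_iff_map_prod_eq_prod_map_map hA.aemeasurable hZ.aemeasurable).mp hAZ, hZB]

lemma integral_mul_resample_eq [IsFiniteMeasure μ] (hA : Measurable A) (hB : Measurable B)
    (hZ : Measurable Z) (hAB : IndepFun A B μ) (hABZ : IndepFun (fun ω => (A ω, B ω)) Z μ)
    (hZB : μ.map Z = μ.map B) (hH : Measurable H) (hY : MemLp (fun ω => H (A ω, B ω)) 2 μ) :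
    ∫ ω, H (A ω, B ω) * H (A ω, Z ω) ∂μ = ∫ ω, (∫ t, H (A ω, t) ∂(μ.map B)) ^ 2 ∂μ := by
  have hY' : MemLp (fun ω => H (A ω, Z ω)) 2 μ :=
    ((identDistrib_prodMk_resample hA hB hZ hAB hABZ hZB).comp hH).memLp_iff.mp hY
  have hK : Measurable fun p : α × β × β => H (p.1, p.2.1) * H (p.1, p.2.2) :=
    (hH.comp (measurable_fst.prodMk (measurable_fst.comp measurable_snd))).mul
      (hH.comp (measurable_fst.prodMk (measurable_snd.comp measurable_snd)))
  have hABZm : Measurable fun ω => (A ω, B ω, Z ω) := hA.prodMk (hB.prodMk hZ)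
  have hg : Measurable fun a => ∫ t, H (a, t) ∂(μ.map B) :=
    hH.stronglyMeasurable.integral_prod_right'.measurable
  have hlaw := map_prodMk_prodMk_eq_prod_prod hA hB hZ hAB hABZ hZB
  have hprod : Integrable (fun ω => H (A ω, B ω) * H (A ω, Z ω)) μ := hY.integrable_mul hY'
  have hint := (integrable_map_measure hK.aestronglyMeasurable hABZm.aemeasurable).mpr hprod
  rw [hlaw] at hint
  calc ∫ ω, H (A ω, B ω) * H (A ω, Z ω) ∂μ
      = ∫ p, H (p.1, p.2.1) * H (p.1, p.2.2) ∂((μ.map A).prod ((μ.map B).prod (μ.map B))) := by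
        rw [← hlaw, integral_map hABZm.aemeasurable hK.aestronglyMeasurable]
    _ = ∫ a, (∫ t, H (a, t) ∂(μ.map B)) ^ 2 ∂(μ.map A) :=
        integral_mul_resample_eq_integral_sq hint
    _ = ∫ ω, (∫ t, H (A ω, t) ∂(μ.map B)) ^ 2 ∂μ :=
        integral_map hA.aemeasurable (hg.pow_const 2).aestronglyMeasurable

variable [IsProbabilityMeasure μ] [StandardBorelSpace β] [Nonempty β]

theorem covariance_resample_eq_variance_condExp (hA : Measurable A) (hB : Measurable B)
    (hZ : Measurable Z) (hAB : IndepFun A B μ) (hABZ : IndepFun (fun ω => (A ω, B ω)) Z μ)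
    (hZB : μ.map Z = μ.map B) (hH : Measurable H) (hY : MemLp (fun ω => H (A ω, B ω)) 2 μ) :
    cov[fun ω => H (A ω, B ω), fun ω => H (A ω, Z ω); μ] =
      Var[μ[fun ω => H (A ω, B ω) | MeasurableSpace.comap A inferInstance]; μ] := by
  have hid : IdentDistrib (fun ω => H (A ω, B ω)) (fun ω => H (A ω, Z ω)) μ μ :=
    (identDistrib_prodMk_resample hA hB hZ hAB hABZ hZB).comp hH
  have hcond := hAB.condExp_comp_prodMk_ae_eq hA hB hH.stronglyMeasurable
    (hY.integrable one_le_two)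
  rw [covariance_eq_sub hY (hid.memLp_iff.mp hY), variance_eq_sub (hY.condExp one_le_two),
    integral_condExp hA.comap_le, ← hid.integral_eq, integral_congr_ae (hcond.pow_const 2)]
  simp only [Pi.mul_apply, Pi.pow_apply]
  rw [integral_mul_resample_eq hA hB hZ hAB hABZ hZB hH hY]
  ring

theorem jansen_identity (hA : Measurable A) (hB : Measurable B)
    (hZ : Measurable Z) (hAB : IndepFun A B μ) (hABZ : IndepFun (fun ω => (A ω, B ω)) Z μ)
    (hZB : μ.map Z = μ.map B) (hH : Measurable H) (hY : MemLp (fun ω => H (A ω, B ω)) 2 μ) :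
    (∫ ω, (H (A ω, B ω) - H (A ω, Z ω)) ^ 2 ∂μ) / 2 =
        Var[fun ω => H (A ω, B ω); μ] -
          cov[fun ω => H (A ω, B ω), fun ω => H (A ω, Z ω); μ] ∧
      (∫ ω, (H (A ω, B ω) - H (A ω, Z ω)) ^ 2 ∂μ) / 2 =
        μ[Var[fun ω => H (A ω, B ω); μ | MeasurableSpace.comap A inferInstance]] := by
  have hid : IdentDistrib (fun ω => H (A ω, B ω)) (fun ω => H (A ω, Z ω)) μ μ :=
    (identDistrib_prodMk_resample hA hB hZ hAB hABZ hZB).comp hH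
  have hsplit := integral_sub_sq_div_two_eq_variance_sub_covariance hY hid
  refine ⟨hsplit, ?_⟩
  rw [hsplit, covariance_resample_eq_variance_condExp hA hB hZ hAB hABZ hZB hH hY,
    ← integral_condVar_add_variance_condExp hA.comap_le hY, add_sub_cancel_right]

end ProbabilityTheory

theorem sobol_jansen_identity_total_effect
    {Ω : Type*} [MeasureSpace Ω] [IsProbabilityMeasure (ℙ : Measure Ω)]
    {d : ℕ} (X : Fin d → Ω → ℝ) (i : Fin d)
    (hXmeas : ∀ j, Measurable (X j))
    (hXindep : iIndepFun X ℙ)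
    (Z : Ω → ℝ) (hZ : Measurable Z)
    (hZlaw : Measure.map Z ℙ = Measure.map (X i) ℙ)
    (hZindep : IndepFun (fun ω => fun j => X j ω) Z ℙ)
    (X' : Fin d → Ω → ℝ)
    (hX' : X' = fun j => if j = i then Z else X j)
    (f : (Fin d → ℝ) → ℝ) (hf : Measurable f)
    (Y Y' : Ω → ℝ)
    (hYdef : Y = fun ω => f (fun j => X j ω))
    (hY'def : Y' = fun ω => f (fun j => X' j ω))
    (hY2 : MemLp Y 2 ℙ) (hVar : 0 < variance Y ℙ) :
    (∫ ω, (Y ω - Y' ω) ^ 2 ∂ℙ) / 2 =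
        variance Y ℙ - ∫ ω, (Y ω - ∫ ω', Y ω' ∂ℙ) * (Y' ω - ∫ ω', Y' ω' ∂ℙ) ∂ℙ ∧
    (∫ ω, (Y ω - Y' ω) ^ 2 ∂ℙ) / 2 =
        ∫ ω, (ℙ[(fun ω' => (Y ω' -
            (ℙ[Y | MeasurableSpace.comap
              (fun ω'' => fun j : {j : Fin d // j ≠ i} => X j ω'') inferInstance]) ω') ^ 2)
          | MeasurableSpace.comap
              (fun ω'' => fun j : {j : Fin d // j ≠ i} => X j ω'') inferInstance]) ω ∂ℙ ∧
    (∫ ω, (Y ω - Y' ω) ^ 2 ∂ℙ) / 2 =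
        variance Y ℙ *
          ((∫ ω, (ℙ[(fun ω' => (Y ω' -
              (ℙ[Y | MeasurableSpace.comap
                (fun ω'' => fun j : {j : Fin d // j ≠ i} => X j ω'') inferInstance]) ω') ^ 2)
            | MeasurableSpace.comap
                (fun ω'' => fun j : {j : Fin d // j ≠ i} => X j ω'') inferInstance]) ω ∂ℙ)
            / variance Y ℙ) := by
  set A : Ω → ({j : Fin d // j ≠ i} → ℝ) := fun ω j => X j ω
  set H : ({j : Fin d // j ≠ i} → ℝ) × ℝ → ℝ :=
    fun p => f ((Equiv.funSplitAt i ℝ).symm (p.2, p.1))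
  have hAm : Measurable A := measurable_pi_lambda _ fun j => hXmeas j
  have hH : Measurable H := hf.comp ((measurable_funSplitAt_symm i).comp measurable_swap)
  have hYH : Y = fun ω => H (A ω, X i ω) := by
    rw [hYdef]
    funext ω
    exact congrArg f ((Equiv.funSplitAt i ℝ).symm_apply_apply _).symm
  have hY'H : Y' = fun ω => H (A ω, Z ω) := by
    rw [hY'def]
    funext ω
    refine congrArg f ((Equiv.funSplitAt i ℝ).eq_symm_apply.mpr ?_)
    ext j
    · simp [hX']
    · simp [hX', j.2, A]
  have hABZ : IndepFun (fun ω => (A ω, X i ω)) Z ℙ :=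
    hZindep.comp ((measurable_pi_lambda _ fun j : {j : Fin d // j ≠ i} =>
      measurable_pi_apply j.1).prodMk
      (measurable_pi_apply i)) measurable_id
  subst hYH hY'H
  obtain ⟨hcov, hcondVar⟩ := jansen_identity hAm (hXmeas i) hZ
    (hXindep.indepFun_restrict_ne hXmeas i) hABZ hZlaw hH hY2
  refine ⟨hcov, hcondVar, ?_⟩
  rw [mul_div_cancel₀ _ hVar.ne']
  exact hcondVar
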